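/- arXiv:1904.08855 — 2 statements merged into one kernel-verified Lean document; each statement's English description precedes it below -/
import Mathlib

section
/- Suppose S ≠ 0 (so that ξ > 0), and suppose γ + 2ξη < 1 and ξ − η ≤ 1. Then every power flow solution v (i.e., v with all components nonzero and v = F(v)) that satisfies |v_i − 1| < r̄·|v_i| for all i = 1,…,n must in fact satisfy |v_i − (1 − η_i)| ≤ r̲·ξ_i for all i. In other words, there are no power flow solutions in the set {v : v_i ≠ 0 and |(v_i − 1)/v_i| < r̄ for all i} outside the closed polydisc {v : |v_i − (1 − η_i)| ≤ r̲·ξ_i for all i}. -/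
open Complex

/-- `η_i := Σ_j Ẑ_{ij} · conj(S_j)` -/
noncomputable def etaI {n : ℕ} (Z : Matrix (Fin n) (Fin n) ℂ) (S : Fin n → ℂ) (i : Fin n) : ℂ :=
  ∑ j, Z i j * (starRingEnd ℂ) (S j)

/-- `ξ_i := Σ_j |Ẑ_{ij} · S_j|` -/
noncomputable def xiI {n : ℕ} (Z : Matrix (Fin n) (Fin n) ℂ) (S : Fin n → ℂ) (i : Fin n) : ℝ :=
  ∑ j, ‖Z i j * S j‖

/-- `γ_i := 2(ξ_i + Re η_i) − ξ_i² − |η_i|²` -/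
noncomputable def gammaI {n : ℕ} (Z : Matrix (Fin n) (Fin n) ℂ) (S : Fin n → ℂ) (i : Fin n) : ℝ :=
  2 * (xiI Z S i + (etaI Z S i).re) - (xiI Z S i) ^ 2 - ‖etaI Z S i‖ ^ 2

/-- `η := max_i |η_i|` -/
noncomputable def etaMax {n : ℕ} (Z : Matrix (Fin n) (Fin n) ℂ) (S : Fin n → ℂ) : ℝ :=
  ⨆ i, ‖etaI Z S i‖

/-- `ξ := max_i ξ_i` -/
noncomputable def xiMax {n : ℕ} (Z : Matrix (Fin n) (Fin n) ℂ) (S : Fin n → ℂ) : ℝ :=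
  ⨆ i, xiI Z S i

/-- `γ := max_i γ_i` -/
noncomputable def gammaMax {n : ℕ} (Z : Matrix (Fin n) (Fin n) ℂ) (S : Fin n → ℂ) : ℝ :=
  ⨆ i, gammaI Z S i

/-- `r̲ := sqrt((1−γ − sqrt((1−γ)² − 4ξ²η²))/(2ξ²))` -/
noncomputable def rLow {n : ℕ} (Z : Matrix (Fin n) (Fin n) ℂ) (S : Fin n → ℂ) : ℝ :=
  Real.sqrt ((1 - gammaMax Z S -
      Real.sqrt ((1 - gammaMax Z S) ^ 2 - 4 * (xiMax Z S) ^ 2 * (etaMax Z S) ^ 2)) /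
    (2 * (xiMax Z S) ^ 2))

/-- `r̄ := sqrt((1−γ + sqrt((1−γ)² − 4ξ²η²))/(2ξ²))` -/
noncomputable def rHigh {n : ℕ} (Z : Matrix (Fin n) (Fin n) ℂ) (S : Fin n → ℂ) : ℝ :=
  Real.sqrt ((1 - gammaMax Z S +
      Real.sqrt ((1 - gammaMax Z S) ^ 2 - 4 * (xiMax Z S) ^ 2 * (etaMax Z S) ^ 2)) /
    (2 * (xiMax Z S) ^ 2))

/-- the fixed point power flow map `F(v)_i := 1 − Σ_j Ẑ_{ij}·conj(S_j)/conj(v_j)` -/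
noncomputable def pfMap {n : ℕ} (Z : Matrix (Fin n) (Fin n) ℂ) (S : Fin n → ℂ)
    (v : Fin n → ℂ) : Fin n → ℂ :=
  fun i => 1 - ∑ j, Z i j * (starRingEnd ℂ) (S j) / (starRingEnd ℂ) (v j)

/-!
Put `a := max_j |1 - 1/v_j|`. Subtracting the fixed-point equation from `1 - η_i` gives
`|v_i - (1 - η_i)| ≤ ξ_i a`, so it suffices to rule out `r̲ < a < r̄`, i.e. (by the choice of
`r̲², r̄²` as the roots) `ξ² a⁴ - (1 - γ) a² + η² < 0`. At an index `k` where the maximum is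
attained, `v_k` lies on the Apollonius circle `|v - 1| = a |v|` and in the disc of radius `ξ_k a`
about `1 - η_k`. The affine map `w ↦ 1 - (1 - a²) w` sends that circle onto `|w| = a`, and the
negativity of the quadratic puts the image of the disc strictly inside or strictly outside it;
the inside case needs `ξ (1 - a²) ≤ 1`, which follows from `ξ - η ≤ 1` and that negativity.
-/

theorem quadratic_neg_of_between_roots {p B C x : ℝ} (hp : 0 < p)
    (hD : 0 ≤ B ^ 2 - 4 * p * C)
    (hlow : (B - √(B ^ 2 - 4 * p * C)) / (2 * p) < x)
    (hhigh : x < (B + √(B ^ 2 - 4 * p * C)) / (2 * p)) :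
    p * x ^ 2 - B * x + C < 0 := by
  rw [div_lt_iff₀ (by positivity)] at hlow
  rw [lt_div_iff₀ (by positivity)] at hhigh
  nlinarith [mul_pos (sub_pos.2 hlow) (sub_pos.2 hhigh), Real.sq_sqrt hD]

theorem mul_one_sub_le_one_of_quadratic_neg {ξ η A : ℝ} (hξ : 0 ≤ ξ) (hη : ξ - η ≤ 1)
    (hq : ξ ^ 2 * A ^ 2 - ((1 - ξ) ^ 2 + η ^ 2 + 2 * η) * A + η ^ 2 < 0) :
    ξ * (1 - A) ≤ 1 := by
  by_contra! h
  have hA : A < 1 := by nlinarith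
  have he : 0 < ξ - 1 - ξ * A := by nlinarith
  have hδ : 0 ≤ 1 + η - ξ := by linarith
  nlinarith [sq_nonneg (η - ξ * A), mul_nonneg hδ he.le, sq_nonneg (1 + η - ξ)]

theorem Complex.norm_sub_one_sq (z : ℂ) : ‖z - 1‖ ^ 2 = ‖z‖ ^ 2 - 2 * z.re + 1 := by
  simp only [Complex.sq_norm, Complex.normSq_apply, Complex.sub_re, Complex.sub_im,
    Complex.one_re, Complex.one_im]
  ring

theorem Complex.norm_one_sub_ofReal_mul_sq (t : ℝ) (z : ℂ) :
    ‖1 - t * z‖ ^ 2 = 1 - t + t * (‖z - 1‖ ^ 2 - (1 - t) * ‖z‖ ^ 2) := by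
  simp only [Complex.sq_norm, Complex.normSq_apply, Complex.sub_re, Complex.sub_im,
    Complex.mul_re, Complex.mul_im, Complex.one_re, Complex.one_im, Complex.ofReal_re,
    Complex.ofReal_im]
  ring

theorem norm_sub_one_ne_mul_norm {u η : ℂ} {ξ a : ℝ} (ha : 0 ≤ a)
    (hd : ‖u - (1 - η)‖ ≤ ξ * a) (hm : ξ * (1 - a ^ 2) ≤ 1)
    (hq : ξ ^ 2 * (a ^ 2) ^ 2 - (1 - (2 * (ξ + η.re) - ξ ^ 2 - ‖η‖ ^ 2)) * a ^ 2
      + ‖η‖ ^ 2 < 0) :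
    ‖u - 1‖ ≠ a * ‖u‖ := by
  intro hu
  set G := ξ ^ 2 * (a ^ 2) ^ 2 - (1 - (2 * (ξ + η.re) - ξ ^ 2 - ‖η‖ ^ 2)) * a ^ 2
    + ‖η‖ ^ 2 with hG
  set t := 1 - a ^ 2 with ht
  have hwu : ‖1 - t * u‖ = a := by
    rw [← sq_eq_sq₀ (norm_nonneg _) ha, Complex.norm_one_sub_ofReal_mul_sq, hu]
    ring
  have hwc : ‖1 - t * (1 - η)‖ ^ 2 = (a * (1 - ξ * t)) ^ 2 + t * G := by
    rw [Complex.norm_one_sub_ofReal_mul_sq, sub_sub_cancel_left, norm_neg, norm_sub_rev,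
      Complex.norm_sub_one_sq, hG, ht]
    ring
  have hdiff : |‖1 - t * u‖ - ‖1 - t * (1 - η)‖| ≤ |t| * (ξ * a) := by
    refine (abs_norm_sub_norm_le _ _).trans ?_
    rw [show (1 - t * u) - (1 - t * (1 - η)) = t * ((1 - η) - u) by ring, norm_mul,
      Complex.norm_real, Real.norm_eq_abs, norm_sub_rev]
    gcongr
  rw [hwu] at hdiff
  rcases lt_trichotomy t 0 with ht0 | ht0 | ht0
  · have hlt : a * (1 - ξ * t) < ‖1 - t * (1 - η)‖ :=
      lt_of_pow_lt_pow_left₀ 2 (norm_nonneg _) (by nlinarith)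
    rw [abs_of_neg ht0] at hdiff
    nlinarith [(abs_le.1 hdiff).1]
  · -- `t = 0`: the circle degenerates to the line `re u = 1/2`, and `G < 0` reads `re η + ξ < 1/2`.
    obtain rfl : a = 1 := by nlinarith
    have hre : u.re = 1 / 2 := by
      have h := congrArg (· ^ 2) hu
      simp only [one_mul, Complex.norm_sub_one_sq] at h
      linarith
    have hdre := (abs_le.1 (u - (1 - η)).abs_re_le_norm).1
    simp only [Complex.sub_re, Complex.one_re] at hdre
    nlinarith
  · have hlt : ‖1 - t * (1 - η)‖ < a * (1 - ξ * t) :=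
      lt_of_pow_lt_pow_left₀ 2 (mul_nonneg ha (by linarith)) (by nlinarith)
    rw [abs_of_pos ht0] at hdiff
    nlinarith [(abs_le.1 hdiff).2]

section PowerFlow

variable {n : ℕ} (Z : Matrix (Fin n) (Fin n) ℂ) (S : Fin n → ℂ)

theorem xiI_nonneg (i : Fin n) : 0 ≤ xiI Z S i :=
  Finset.sum_nonneg fun _ _ => norm_nonneg _

theorem xiI_le_xiMax (i : Fin n) : xiI Z S i ≤ xiMax Z S :=
  le_ciSup (Finite.bddAbove_range _) i

theorem norm_etaI_le_etaMax (i : Fin n) : ‖etaI Z S i‖ ≤ etaMax Z S :=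
  le_ciSup (f := fun k => ‖etaI Z S k‖) (Finite.bddAbove_range _) i

theorem gammaI_le_gammaMax (i : Fin n) : gammaI Z S i ≤ gammaMax Z S :=
  le_ciSup (Finite.bddAbove_range _) i

theorem one_sub_gammaMax_le [Nonempty (Fin n)] :
    1 - gammaMax Z S ≤ (1 - xiMax Z S) ^ 2 + etaMax Z S ^ 2 + 2 * etaMax Z S := by
  obtain ⟨k, hk⟩ := Finite.exists_max (xiI Z S)
  have hξ : xiMax Z S = xiI Z S k := le_antisymm (ciSup_le hk) (xiI_le_xiMax Z S k)
  have hγ := gammaI_le_gammaMax Z S k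
  have hη := norm_etaI_le_etaMax Z S k
  have hre := (abs_le.1 (etaI Z S k).abs_re_le_norm).1
  rw [gammaI, ← hξ] at hγ
  nlinarith [norm_nonneg (etaI Z S k)]

theorem quadratic_le_quadratic_max (i : Fin n) {x : ℝ} (hx : 0 ≤ x) :
    xiI Z S i ^ 2 * x ^ 2 - (1 - gammaI Z S i) * x + ‖etaI Z S i‖ ^ 2
      ≤ xiMax Z S ^ 2 * x ^ 2 - (1 - gammaMax Z S) * x + etaMax Z S ^ 2 := by
  have hξ := pow_le_pow_left₀ (xiI_nonneg Z S i) (xiI_le_xiMax Z S i) 2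
  have hη := pow_le_pow_left₀ (norm_nonneg _) (norm_etaI_le_etaMax Z S i) 2
  nlinarith [gammaI_le_gammaMax Z S i, sq_nonneg x]

theorem xiI_mul_one_sub_le_one [Nonempty (Fin n)] (h2 : xiMax Z S - etaMax Z S ≤ 1) {A : ℝ}
    (hA : 0 ≤ A) (hq : xiMax Z S ^ 2 * A ^ 2 - (1 - gammaMax Z S) * A + etaMax Z S ^ 2 < 0)
    (i : Fin n) : xiI Z S i * (1 - A) ≤ 1 := by
  have hm : xiMax Z S * (1 - A) ≤ 1 :=
    mul_one_sub_le_one_of_quadratic_neg ((xiI_nonneg Z S i).trans (xiI_le_xiMax Z S i)) h2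
      (by nlinarith [one_sub_gammaMax_le Z S])
  rcases le_total (1 - A) 0 with h | h
  · nlinarith [xiI_nonneg Z S i]
  · nlinarith [xiI_le_xiMax Z S i]

theorem norm_pfMap_sub_le {v : Fin n → ℂ} {a : ℝ} (hv : ∀ j, ‖1 - (v j)⁻¹‖ ≤ a) (i : Fin n) :
    ‖pfMap Z S v i - (1 - etaI Z S i)‖ ≤ xiI Z S i * a := by
  have hsum : pfMap Z S v i - (1 - etaI Z S i)
      = ∑ j, Z i j * (starRingEnd ℂ) (S j) * (starRingEnd ℂ) (1 - (v j)⁻¹) := by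
    simp only [pfMap, etaI, map_sub, map_one, map_inv₀, mul_sub, mul_one, div_eq_mul_inv,
      Finset.sum_sub_distrib]
    ring
  rw [hsum, xiI, Finset.sum_mul]
  refine (norm_sum_le _ _).trans (Finset.sum_le_sum fun j _ => ?_)
  rw [norm_mul, norm_mul, norm_mul, Complex.norm_conj, Complex.norm_conj]
  exact mul_le_mul_of_nonneg_left (hv j) (by positivity)

end PowerFlow

theorem no_pf_solution_outside_polydisc_general {n : ℕ}
    (Z : Matrix (Fin n) (Fin n) ℂ)
    (S : Fin n → ℂ)
    (h1 : gammaMax Z S + 2 * xiMax Z S * etaMax Z S < 1)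
    (h2 : xiMax Z S - etaMax Z S ≤ 1) :
    ∀ v : Fin n → ℂ, (∀ i, v i ≠ 0) → pfMap Z S v = v →
      (∀ i, ‖v i - 1‖ < rHigh Z S * ‖v i‖) →
      ∀ i, ‖v i - (1 - etaI Z S i)‖ ≤ rLow Z S * xiI Z S i := by
  intro v hv hfix hball i
  have : Nonempty (Fin n) := ⟨i⟩
  obtain ⟨k, hk⟩ := Finite.exists_max fun j => ‖1 - (v j)⁻¹‖
  set a := ‖1 - (v k)⁻¹‖
  have hdist (j : Fin n) : ‖v j - (1 - etaI Z S j)‖ ≤ xiI Z S j * a := by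
    simpa only [hfix] using norm_pfMap_sub_le Z S hk j
  have hvk : ‖v k - 1‖ = a * ‖v k‖ := by
    rw [← norm_mul, sub_mul, one_mul, inv_mul_cancel₀ (hv k)]
  have hξ : 0 < xiMax Z S := by
    -- if `ξ = 0`, then `r̄ = √(x / 0) = 0` and the hypothesis `|v_i - 1| < r̄ |v_i|` is void
    refine ((xiI_nonneg Z S i).trans (xiI_le_xiMax Z S i)).lt_of_ne fun h0 => ?_
    simpa [rHigh, ← h0] using (norm_nonneg _).trans_lt (hball i)
  rw [mul_comm (rLow Z S)]
  refine (hdist i).trans (mul_le_mul_of_nonneg_left ?_ (xiI_nonneg Z S i))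
  by_contra! hlow
  have ha : 0 < a := (Real.sqrt_nonneg _).trans_lt hlow
  have hhigh : a < rHigh Z S := lt_of_mul_lt_mul_right (hvk ▸ hball k) (norm_nonneg _)
  have hη := (norm_nonneg _).trans (norm_etaI_le_etaMax Z S i)
  have hD : 0 ≤ (1 - gammaMax Z S) ^ 2 - 4 * xiMax Z S ^ 2 * etaMax Z S ^ 2 := by
    nlinarith [mul_nonneg hξ.le hη]
  have hq : xiMax Z S ^ 2 * (a ^ 2) ^ 2 - (1 - gammaMax Z S) * a ^ 2 + etaMax Z S ^ 2 < 0 :=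
    quadratic_neg_of_between_roots (by positivity) hD ((Real.sqrt_lt' ha).1 hlow)
      ((Real.lt_sqrt ha.le).1 hhigh)
  exact norm_sub_one_ne_mul_norm ha.le (hdist k)
    (xiI_mul_one_sub_le_one Z S h2 (sq_nonneg a) hq k)
    ((quadratic_le_quadratic_max Z S k (sq_nonneg a)).trans_lt hq) hvk

/-- under the conditions `γ + 2ξη < 1` and `ξ − η ≤ 1` (with `S ≠ 0`),
every power flow solution `v` with `|v_i − 1| < r̄·|v_i|` for all `i` lies in the
closed polydisc `{v : |v_i − (1 − η_i)| ≤ r̲·ξ_i ∀ i}`. -/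
theorem no_pf_solution_outside_polydisc {n : ℕ} (hn : 1 ≤ n)
    (Z : Matrix (Fin n) (Fin n) ℂ) (hZ : IsUnit Z.det)
    (S : Fin n → ℂ) (hS : S ≠ 0)
    (h1 : gammaMax Z S + 2 * xiMax Z S * etaMax Z S < 1)
    (h2 : xiMax Z S - etaMax Z S ≤ 1) :
    ∀ v : Fin n → ℂ, (∀ i, v i ≠ 0) → pfMap Z S v = v →
      (∀ i, ‖v i - 1‖ < rHigh Z S * ‖v i‖) →
      ∀ i, ‖v i - (1 - etaI Z S i)‖ ≤ rLow Z S * xiI Z S i :=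
  no_pf_solution_outside_polydisc_general Z S h1 h2
end

section
/- Let c ∈ ℂ^n, let r ∈ ℝ^n with r_i > 0 for all i, and let D := {z ∈ ℂ^n : |z_i − c_i| < r_i for all i} be the open polydisc with center c and radii r. Suppose f : ℂ^n → ℂ^n is holomorphic on D (complex-differentiable in the several-variables sense), continuous on the closure of D, maps the closure of D into D, and the closure of the image f(D) is contained in D. Then f has exactly one fixed point in D. -/
/-!
The pseudo-hyperbolic distance `|(a - z) / (1 - ā z)|` on the unit disc is not increased by
holomorphic self-maps (Schwarz–Pick), and neither is its coordinatewise maximum on the polydisc: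
composing with the polydisc automorphisms that exchange `0` with a given point reduces this to
the Schwarz lemma for the sup norm. After an affine change of coordinates, `D` becomes the unit
polydisc and `f` maps it into the polydisc of some radius `s < 1`, because `closure (f '' D)` is a
compact subset of `D`. Since `z ↦ s z` contracts the pseudo-hyperbolic distance by the factor
`2s / (1 + s²) < 1`, the iterates of `f` form a Cauchy sequence; its limit is a fixed point, and
any two fixed points are at distance zero.
-/

open Complex Metric Set ComplexConjugate Function Filter Topology

noncomputable def discAut (a z : ℂ) : ℂ := (a - z) / (1 - conj a * z)

lemma normSq_one_sub_conj_mul_sub_normSq_sub (a z : ℂ) :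
    normSq (1 - conj a * z) - normSq (a - z) = (1 - normSq a) * (1 - normSq z) := by
  simp only [normSq_apply, sub_re, sub_im, mul_re, mul_im, conj_re, conj_im, one_re, one_im]
  ring

lemma normSq_sub_lt_normSq_one_sub_conj_mul {a z : ℂ} (ha : ‖a‖ < 1) (hz : ‖z‖ < 1) :
    normSq (a - z) < normSq (1 - conj a * z) := by
  have ha' : normSq a < 1 := by rw [normSq_eq_norm_sq]; nlinarith [norm_nonneg a]
  have hz' : normSq z < 1 := by rw [normSq_eq_norm_sq]; nlinarith [norm_nonneg z]
  nlinarith [normSq_one_sub_conj_mul_sub_normSq_sub a z]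

lemma one_sub_conj_mul_ne_zero {a z : ℂ} (ha : ‖a‖ < 1) (hz : ‖z‖ < 1) :
    1 - conj a * z ≠ 0 := by
  intro h
  simpa [h] using (normSq_nonneg (a - z)).trans_lt (normSq_sub_lt_normSq_one_sub_conj_mul ha hz)

lemma norm_discAut_lt_one {a z : ℂ} (ha : ‖a‖ < 1) (hz : ‖z‖ < 1) : ‖discAut a z‖ < 1 := by
  rw [discAut, norm_div, div_lt_one (norm_pos_iff.2 (one_sub_conj_mul_ne_zero ha hz))]
  have h := normSq_sub_lt_normSq_one_sub_conj_mul ha hz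
  rw [normSq_eq_norm_sq, normSq_eq_norm_sq] at h
  exact lt_of_pow_lt_pow_left₀ 2 (norm_nonneg _) h

@[simp]
lemma discAut_zero_right (a : ℂ) : discAut a 0 = a := by simp [discAut]

@[simp]
lemma discAut_self (a : ℂ) : discAut a a = 0 := by simp [discAut]

lemma discAut_discAut {a z : ℂ} (ha : ‖a‖ < 1) (hz : ‖z‖ < 1) : discAut a (discAut a z) = z := by
  have hz' := one_sub_conj_mul_ne_zero ha hz
  have h₁ : 1 - conj a * discAut a z = (1 - conj a * a) / (1 - conj a * z) := by
    rw [discAut]; field_simp; ring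
  have h₂ : a - discAut a z = z * (1 - conj a * a) / (1 - conj a * z) := by
    rw [discAut, eq_div_iff hz', sub_mul, div_mul_cancel₀ _ hz']; ring
  rw [discAut, h₁, h₂, div_div_div_cancel_right₀ hz',
    mul_div_cancel_right₀ _ (one_sub_conj_mul_ne_zero ha ha)]

lemma differentiableOn_discAut {a : ℂ} (ha : ‖a‖ < 1) :
    DifferentiableOn ℂ (discAut a) (ball 0 1) := fun _ hz =>
  ((differentiableAt_const a).sub differentiableAt_id).div
    ((differentiableAt_const 1).sub (differentiableAt_id.const_mul _))
    (one_sub_conj_mul_ne_zero ha (mem_ball_zero_iff.1 hz)) |>.differentiableWithinAt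

lemma one_add_sq_mul_norm_one_sub_le {s : ℝ} (hs : s ^ 2 ≤ 1) {t : ℂ} (ht : ‖t‖ ≤ 1) :
    (1 + s ^ 2) * ‖1 - t‖ ≤ 2 * ‖1 - (s : ℂ) ^ 2 * t‖ := by
  have ht' : normSq t ≤ 1 := by rw [normSq_eq_norm_sq]; nlinarith [norm_nonneg t]
  have hre : -1 ≤ t.re := (abs_le.1 ((abs_re_le_norm t).trans ht)).1
  have key : 4 * normSq (1 - (s : ℂ) ^ 2 * t) - (1 + s ^ 2) ^ 2 * normSq (1 - t)
      = (1 - s ^ 2) * ((1 + 3 * s ^ 2) * (1 - normSq t) + 2 * (1 - s ^ 2) * (1 + t.re)) := by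
    rw [show (s : ℂ) ^ 2 = ((s ^ 2 : ℝ) : ℂ) by push_cast; ring]
    simp only [normSq_apply, sub_re, sub_im, mul_re, mul_im, ofReal_re, ofReal_im, one_re, one_im]
    ring
  have hnonneg :
      0 ≤ (1 - s ^ 2) * ((1 + 3 * s ^ 2) * (1 - normSq t) + 2 * (1 - s ^ 2) * (1 + t.re)) := by
    have hs' : 0 ≤ 1 - s ^ 2 := by linarith
    exact mul_nonneg hs' (add_nonneg (mul_nonneg (by positivity) (by linarith))
      (mul_nonneg (mul_nonneg zero_le_two hs') (by linarith)))
  rw [normSq_eq_norm_sq, normSq_eq_norm_sq] at key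
  rw [← pow_le_pow_iff_left₀ (by positivity) (by positivity) two_ne_zero]
  nlinarith

/-- `2s / (1 + s²) = |discAut s (-s)|` is the pseudo-hyperbolic diameter of the disc of radius
`s`, so the constant is sharp. -/
lemma norm_discAut_ofReal_mul_le {s : ℝ} (hs₀ : 0 ≤ s) (hs₁ : s ≤ 1) {u v : ℂ} (hu : ‖u‖ < 1)
    (hv : ‖v‖ < 1) : ‖discAut (s * u) (s * v)‖ ≤ 2 * s / (1 + s ^ 2) * ‖discAut u v‖ := by
  have hsu : ‖(s : ℂ) * u‖ < 1 := by
    rw [norm_mul, norm_real, Real.norm_of_nonneg hs₀]; nlinarith [norm_nonneg u]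
  have hsv : ‖(s : ℂ) * v‖ < 1 := by
    rw [norm_mul, norm_real, Real.norm_of_nonneg hs₀]; nlinarith [norm_nonneg v]
  have hden : 1 - conj ((s : ℂ) * u) * (s * v) = 1 - (s : ℂ) ^ 2 * (conj u * v) := by
    rw [map_mul, conj_ofReal]; ring
  have hpos₁ : 0 < ‖1 - (s : ℂ) ^ 2 * (conj u * v)‖ :=
    norm_pos_iff.2 (hden ▸ one_sub_conj_mul_ne_zero hsu hsv)
  have hpos₂ : 0 < ‖1 - conj u * v‖ := norm_pos_iff.2 (one_sub_conj_mul_ne_zero hu hv)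
  have hkey := one_add_sq_mul_norm_one_sub_le (by nlinarith) (t := conj u * v)
    (by rw [norm_mul, RCLike.norm_conj]; nlinarith [norm_nonneg u, norm_nonneg v])
  calc ‖discAut (s * u) (s * v)‖ = s * ‖u - v‖ / ‖1 - (s : ℂ) ^ 2 * (conj u * v)‖ := by
        rw [discAut, hden, ← mul_sub, norm_div, norm_mul, norm_real, Real.norm_of_nonneg hs₀]
    _ ≤ s * ‖u - v‖ * 2 / ((1 + s ^ 2) * ‖1 - conj u * v‖) := by
        rw [div_le_div_iff₀ hpos₁ (by positivity)]
        linear_combination (s * ‖u - v‖) * hkey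
    _ = 2 * s / (1 + s ^ 2) * ‖discAut u v‖ := by
        rw [discAut, norm_div]; field_simp

lemma norm_sub_le_two_mul_norm_discAut {a z : ℂ} (ha : ‖a‖ < 1) (hz : ‖z‖ < 1) :
    ‖a - z‖ ≤ 2 * ‖discAut a z‖ := by
  have hden : ‖1 - conj a * z‖ ≤ 2 := by
    calc ‖1 - conj a * z‖ ≤ ‖(1 : ℂ)‖ + ‖conj a‖ * ‖z‖ :=
          (norm_sub_le _ _).trans_eq (by rw [norm_mul])
      _ ≤ 2 := by rw [norm_one, RCLike.norm_conj]; nlinarith [norm_nonneg a, norm_nonneg z]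
  calc ‖a - z‖ = ‖discAut a z‖ * ‖1 - conj a * z‖ := by
        rw [discAut, norm_div,
          div_mul_cancel₀ _ (norm_ne_zero_iff.2 (one_sub_conj_mul_ne_zero ha hz))]
    _ ≤ ‖discAut a z‖ * 2 := by gcongr
    _ = 2 * ‖discAut a z‖ := mul_comm _ _

section Polydisc

variable {ι κ : Type*}

noncomputable def polydiscAut (a z : ι → ℂ) : ι → ℂ := fun j => discAut (a j) (z j)

@[simp]
lemma polydiscAut_zero_right (a : ι → ℂ) : polydiscAut a 0 = a := by
  ext j; simp [polydiscAut]

@[simp]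
lemma polydiscAut_self (a : ι → ℂ) : polydiscAut a a = 0 := by
  ext j; simp [polydiscAut]

variable [Fintype ι] [Fintype κ] {a z w : ι → ℂ}

lemma mem_ball_zero_one_pi : z ∈ ball 0 1 ↔ ∀ j, ‖z j‖ < 1 := by
  rw [mem_ball_zero_iff, pi_norm_lt_iff one_pos]

lemma polydiscAut_polydiscAut (ha : a ∈ ball 0 1) (hz : z ∈ ball 0 1) :
    polydiscAut a (polydiscAut a z) = z := by
  ext j
  exact discAut_discAut (mem_ball_zero_one_pi.1 ha j) (mem_ball_zero_one_pi.1 hz j)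

lemma mapsTo_polydiscAut (ha : a ∈ ball 0 1) : MapsTo (polydiscAut a) (ball 0 1) (ball 0 1) :=
  fun _ hz => mem_ball_zero_one_pi.2 fun j =>
    norm_discAut_lt_one (mem_ball_zero_one_pi.1 ha j) (mem_ball_zero_one_pi.1 hz j)

lemma differentiableOn_polydiscAut (ha : a ∈ ball 0 1) :
    DifferentiableOn ℂ (polydiscAut a) (ball 0 1) :=
  differentiableOn_pi.2 fun j =>
    (differentiableOn_discAut (mem_ball_zero_one_pi.1 ha j)).comp
      (differentiable_apply j).differentiableOn fun _ hz =>
        mem_ball_zero_iff.2 (mem_ball_zero_one_pi.1 hz j)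

theorem norm_polydiscAut_map_le {F : (ι → ℂ) → κ → ℂ} (hd : DifferentiableOn ℂ F (ball 0 1))
    (hm : MapsTo F (ball 0 1) (ball 0 1)) (hz : z ∈ ball 0 1) (hw : w ∈ ball 0 1) :
    ‖polydiscAut (F z) (F w)‖ ≤ ‖polydiscAut z w‖ := by
  set h := polydiscAut (F z) ∘ F ∘ polydiscAut z
  have hmaps : MapsTo h (ball 0 1) (ball 0 1) :=
    (mapsTo_polydiscAut (hm hz)).comp (hm.comp (mapsTo_polydiscAut hz))
  have hdiff : DifferentiableOn ℂ h (ball 0 1) :=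
    (differentiableOn_polydiscAut (hm hz)).comp
      (hd.comp (differentiableOn_polydiscAut hz) (mapsTo_polydiscAut hz))
      (hm.comp (mapsTo_polydiscAut hz))
  have h0 : h 0 = 0 := by simp [h]
  have hschwarz := Complex.norm_le_norm_of_mapsTo_ball hdiff
    (hmaps.mono_right ball_subset_closedBall) h0 (mem_ball_zero_iff.1 (mapsTo_polydiscAut hz hw))
  simpa [h, polydiscAut_polydiscAut hz hw] using hschwarz

lemma norm_polydiscAut_ofReal_smul_le {s : ℝ} (hs₀ : 0 ≤ s) (hs₁ : s ≤ 1) (hz : z ∈ ball 0 1)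
    (hw : w ∈ ball 0 1) :
    ‖polydiscAut ((s : ℂ) • z) ((s : ℂ) • w)‖ ≤ 2 * s / (1 + s ^ 2) * ‖polydiscAut z w‖ :=
  (pi_norm_le_iff_of_nonneg (by positivity)).2 fun j =>
    (norm_discAut_ofReal_mul_le hs₀ hs₁ (mem_ball_zero_one_pi.1 hz j)
      (mem_ball_zero_one_pi.1 hw j)).trans
    (mul_le_mul_of_nonneg_left (norm_le_pi_norm (polydiscAut z w) j) (by positivity))

lemma norm_sub_le_two_mul_norm_polydiscAut (hz : z ∈ ball 0 1) (hw : w ∈ ball 0 1) :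
    ‖z - w‖ ≤ 2 * ‖polydiscAut z w‖ :=
  (pi_norm_le_iff_of_nonneg (by positivity)).2 fun j =>
    (norm_sub_le_two_mul_norm_discAut (mem_ball_zero_one_pi.1 hz j)
      (mem_ball_zero_one_pi.1 hw j)).trans
    (mul_le_mul_of_nonneg_left (norm_le_pi_norm (polydiscAut z w) j) zero_le_two)

theorem norm_polydiscAut_map_le_mul {F : (ι → ℂ) → κ → ℂ} {s : ℝ} (hs : s ≤ 1)
    (hd : DifferentiableOn ℂ F (ball 0 1)) (hm : MapsTo F (ball 0 1) (ball 0 s))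
    (hz : z ∈ ball 0 1) (hw : w ∈ ball 0 1) :
    ‖polydiscAut (F z) (F w)‖ ≤ 2 * s / (1 + s ^ 2) * ‖polydiscAut z w‖ := by
  have hs₀ : 0 < s := pos_of_mem_ball (hm hz)
  set G := (s⁻¹ : ℂ) • F
  have hFG : ∀ x, F x = (s : ℂ) • G x := fun x => by
    simp only [G, Pi.smul_apply, smul_smul, mul_inv_cancel₀ (ofReal_ne_zero.2 hs₀.ne'), one_smul]
  have hGm : MapsTo G (ball 0 1) (ball 0 1) := fun x hx => by
    have := mem_ball_zero_iff.1 (hm hx)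
    rw [mem_ball_zero_iff, show G x = (s⁻¹ : ℂ) • F x from rfl, norm_smul, norm_inv, norm_real,
      Real.norm_of_nonneg hs₀.le]
    exact (inv_mul_lt_one₀ hs₀).2 this
  have hGd : DifferentiableOn ℂ G (ball 0 1) := hd.const_smul _
  calc ‖polydiscAut (F z) (F w)‖ = ‖polydiscAut ((s : ℂ) • G z) ((s : ℂ) • G w)‖ := by
        rw [hFG z, hFG w]
    _ ≤ 2 * s / (1 + s ^ 2) * ‖polydiscAut (G z) (G w)‖ :=
        norm_polydiscAut_ofReal_smul_le hs₀.le hs (hGm hz) (hGm hw)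
    _ ≤ 2 * s / (1 + s ^ 2) * ‖polydiscAut z w‖ := by
        gcongr
        exact norm_polydiscAut_map_le hGd hGm hz hw

lemma norm_polydiscAut_iterate_le {F : (ι → ℂ) → ι → ℂ} {L : ℝ} (hL : 0 ≤ L)
    (hm : MapsTo F (ball 0 1) (ball 0 1))
    (hF : ∀ z ∈ ball 0 1, ∀ w ∈ ball 0 1, ‖polydiscAut (F z) (F w)‖ ≤ L * ‖polydiscAut z w‖)
    (hz : z ∈ ball 0 1) (hw : w ∈ ball 0 1) (k : ℕ) :
    ‖polydiscAut (F^[k] z) (F^[k] w)‖ ≤ L ^ k * ‖polydiscAut z w‖ := by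
  induction k with
  | zero => simp
  | succ k ih =>
    rw [iterate_succ_apply', iterate_succ_apply', pow_succ', mul_assoc]
    exact (hF _ (hm.iterate k hz) _ (hm.iterate k hw)).trans (mul_le_mul_of_nonneg_left ih hL)

lemma dist_iterate_le {F : (ι → ℂ) → ι → ℂ} {L : ℝ} (hL : 0 ≤ L)
    (hm : MapsTo F (ball 0 1) (ball 0 1))
    (hF : ∀ z ∈ ball 0 1, ∀ w ∈ ball 0 1, ‖polydiscAut (F z) (F w)‖ ≤ L * ‖polydiscAut z w‖)
    (hz : z ∈ ball 0 1) (hw : w ∈ ball 0 1) (k : ℕ) :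
    dist (F^[k] z) (F^[k] w) ≤ 2 * L ^ k := by
  have hlt : ‖polydiscAut z w‖ < 1 := mem_ball_zero_iff.1 (mapsTo_polydiscAut hz hw)
  calc dist (F^[k] z) (F^[k] w) ≤ 2 * ‖polydiscAut (F^[k] z) (F^[k] w)‖ := by
        rw [dist_eq_norm]
        exact norm_sub_le_two_mul_norm_polydiscAut (hm.iterate k hz) (hm.iterate k hw)
    _ ≤ 2 * (L ^ k * 1) := by
        gcongr
        exact (norm_polydiscAut_iterate_le hL hm hF hz hw k).trans (by gcongr)
    _ = 2 * L ^ k := by rw [mul_one]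

theorem existsUnique_fixedPt_of_mapsTo_ball {F : (ι → ℂ) → ι → ℂ} {s : ℝ} (hs : s < 1)
    (hd : DifferentiableOn ℂ F (ball 0 1)) (hm : MapsTo F (ball 0 1) (ball 0 s)) :
    ∃! w, w ∈ ball 0 1 ∧ F w = w := by
  have hm₁ : MapsTo F (ball 0 1) (ball 0 1) := hm.mono_right (ball_subset_ball hs.le)
  have h₀ : (0 : ι → ℂ) ∈ ball 0 1 := mem_ball_self one_pos
  have hs₀ : 0 < s := pos_of_mem_ball (hm h₀)
  set L := 2 * s / (1 + s ^ 2)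
  have hL₀ : 0 ≤ L := by positivity
  have hL₁ : L < 1 := by rw [div_lt_one (by positivity)]; nlinarith [sq_pos_of_pos (sub_pos.2 hs)]
  have hdist : ∀ {z w}, z ∈ ball 0 1 → w ∈ ball 0 1 →
      ∀ k, dist (F^[k] z) (F^[k] w) ≤ 2 * L ^ k :=
    dist_iterate_le hL₀ hm₁ fun z hz w hw => norm_polydiscAut_map_le_mul hs.le hd hm hz hw
  obtain ⟨w, hw⟩ := cauchySeq_tendsto_of_complete <| cauchySeq_of_le_geometric L 2 hL₁
    (f := fun k => F^[k] 0) fun k => by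
      rw [iterate_succ_apply]
      exact hdist h₀ (hm₁ h₀) k
  have hwF : Tendsto (fun k => F (F^[k] 0)) atTop (𝓝 w) := by
    simpa only [comp_def, iterate_succ_apply'] using hw.comp (tendsto_add_atTop_nat 1)
  have hwmem : w ∈ ball 0 1 := closedBall_subset_ball hs <| isClosed_closedBall.mem_of_tendsto hwF
    (Eventually.of_forall fun k => ball_subset_closedBall (hm (hm₁.iterate k h₀)))
  have hfix : F w = w := tendsto_nhds_unique
    ((hd.continuousOn.continuousAt (isOpen_ball.mem_nhds hwmem)).tendsto.comp hw) hwF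
  refine ⟨w, ⟨hwmem, hfix⟩, fun y ⟨hy, hfy⟩ => dist_le_zero.1 ?_⟩
  refine ge_of_tendsto'
    (by simpa using (tendsto_pow_atTop_nhds_zero_of_lt_one hL₀ hL₁).const_mul 2) fun k => ?_
  simpa only [iterate_fixed hfy, iterate_fixed hfix] using hdist hy hwmem k

end Polydisc

section Chart

variable {ι : Type*} [Fintype ι]

noncomputable def polydiscChart (c : ι → ℂ) (r : ι → ℝ) (hr : ∀ i, 0 < r i) :
    (ι → ℂ) ≃ (ι → ℂ) where
  toFun z i := c i + r i * z i
  invFun y i := (y i - c i) / r i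
  left_inv z := funext fun i => by simp [ofReal_ne_zero.2 (hr i).ne']
  right_inv y := funext fun i => by simp [mul_div_cancel₀ _ (ofReal_ne_zero.2 (hr i).ne')]

lemma polydiscChart_mem_iff {c : ι → ℂ} {r : ι → ℝ} (hr : ∀ i, 0 < r i) (z : ι → ℂ) :
    polydiscChart c r hr z ∈ {y | ∀ i, ‖y i - c i‖ < r i} ↔ z ∈ ball 0 1 := by
  simp only [mem_ofPred_eq, mem_ball_zero_one_pi]
  refine forall_congr' fun i => ?_
  simp [polydiscChart, abs_of_pos (hr i), mul_lt_iff_lt_one_right (hr i)]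

lemma differentiable_polydiscChart {c : ι → ℂ} {r : ι → ℝ} (hr : ∀ i, 0 < r i) :
    Differentiable ℂ (polydiscChart c r hr) := by
  show Differentiable ℂ fun (z : ι → ℂ) i => c i + r i * z i
  fun_prop

lemma differentiable_polydiscChart_symm {c : ι → ℂ} {r : ι → ℝ} (hr : ∀ i, 0 < r i) :
    Differentiable ℂ (polydiscChart c r hr).symm := by
  show Differentiable ℂ fun (y : ι → ℂ) i => (y i - c i) / r i
  fun_prop

lemma isBounded_polydisc (c : ι → ℂ) (r : ι → ℝ) :
    Bornology.IsBounded {y : ι → ℂ | ∀ i, ‖y i - c i‖ < r i} :=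
  (isCompact_univ_pi fun i => isCompact_closedBall (c i) (r i)).isBounded.subset
    fun _ hy i _ => mem_closedBall_iff_norm.2 (hy i).le

end Chart

theorem unique_fixed_point_in_polydisc_general {n : ℕ}
    (c : Fin n → ℂ) (r : Fin n → ℝ) (hr : ∀ i, 0 < r i)
    (f : (Fin n → ℂ) → (Fin n → ℂ))
    (D : Set (Fin n → ℂ)) (hD : D = {z | ∀ i, ‖z i - c i‖ < r i})
    (hf : DifferentiableOn ℂ f D)
    (himg : closure (f '' D) ⊆ D) :
    ∃! w, w ∈ D ∧ f w = w := by
  set e := polydiscChart c r hr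
  have he : ∀ z, e z ∈ D ↔ z ∈ ball 0 1 := fun z => hD ▸ polydiscChart_mem_iff hr z
  have hK : IsCompact (closure (f '' D)) :=
    isCompact_of_isClosed_isBounded isClosed_closure ((hD ▸ isBounded_polydisc c r).subset himg)
  obtain ⟨s, hs, hKs⟩ := exists_lt_subset_ball
    (hK.image (differentiable_polydiscChart_symm hr).continuous).isClosed
    (image_subset_iff.2 fun y hy => by rw [mem_preimage, ← he, e.apply_symm_apply]; exact himg hy)
  have hFd : DifferentiableOn ℂ (e.symm ∘ f ∘ e) (ball 0 1) :=
    (differentiable_polydiscChart_symm hr).comp_differentiableOn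
      (hf.comp (differentiable_polydiscChart hr).differentiableOn fun z hz => (he z).2 hz)
  have hFm : MapsTo (e.symm ∘ f ∘ e) (ball 0 1) (ball 0 s) := fun z hz =>
    hKs (mem_image_of_mem _ (subset_closure (mem_image_of_mem f ((he z).2 hz))))
  rw [← e.existsUnique_congr_right]
  simpa only [he, comp_apply, e.symm_apply_eq] using existsUnique_fixedPt_of_mapsTo_ball hs hFd hFm

/-- a function holomorphic in an open polydisc `D`, continuous on its
closure, mapping the closure into `D`, and whose image of `D` has closure contained in
`D`, has exactly one fixed point in `D`. -/
theorem unique_fixed_point_in_polydisc {n : ℕ}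
    (c : Fin n → ℂ) (r : Fin n → ℝ) (hr : ∀ i, 0 < r i)
    (f : (Fin n → ℂ) → (Fin n → ℂ))
    (D : Set (Fin n → ℂ)) (hD : D = {z | ∀ i, ‖z i - c i‖ < r i})
    (hf : DifferentiableOn ℂ f D)
    (hfc : ContinuousOn f (closure D))
    (hmap : Set.MapsTo f (closure D) D)
    (himg : closure (f '' D) ⊆ D) :
    ∃! w, w ∈ D ∧ f w = w :=
  unique_fixed_point_in_polydisc_general c r hr f D hD hf himg
end
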